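/- arXiv:2310.20029 — 2 statements merged into one kernel-verified Lean document; each statement's English description precedes it below -/
import Mathlib

section
/- For every z ∈ 𝔉 \ {0}, the first Hurwitz partial quotient a₁(z) := [1/z] satisfies a₁(z) ∈ ℤ[i] \ {0, 1, i, -1}. -/
set_option maxHeartbeats 1000000

open Complex

/-- The nearest Gaussian integer to a complex number. -/
noncomputable def nearestGaussianInt (z : ℂ) : ℂ :=
  (⌊z.re + 1/2⌋ : ℤ) + (⌊z.im + 1/2⌋ : ℤ) * Complex.I

/-- The fundamental square 𝔉. -/
def fundSquare : Set ℂ :=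
  { w : ℂ | -(1/2) ≤ w.re ∧ w.re < 1/2 ∧ -(1/2) ≤ w.im ∧ w.im < 1/2 }

/-- For `z ∈ 𝔉 \ {0}`, the first Hurwitz partial quotient `a₁(z) = [1/z]` is a Gaussian
integer not equal to `0, 1, i, -1`. -/
theorem stmt_2 (z : ℂ) (hz : z ∈ fundSquare) (hz0 : z ≠ 0) :
    (∃ a b : ℤ, nearestGaussianInt (1/z) = (a : ℂ) + (b : ℂ) * Complex.I) ∧
      nearestGaussianInt (1/z) ∉ ({0, 1, Complex.I, -1} : Set ℂ) := by
  obtain ⟨hr1, hr2, hs1, hs2⟩ := hz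
  have hn : 0 < Complex.normSq z := Complex.normSq_pos.mpr hz0
  set r := z.re with hrdef
  set s := z.im with hsdef
  set n := Complex.normSq z with hndef
  have hnval : n = r^2 + s^2 := by rw [hndef, Complex.normSq_apply]; ring
  have hre : (1/z).re = r / n := by rw [one_div, Complex.inv_re]
  have him : (1/z).im = -s / n := by rw [one_div, Complex.inv_im]
  set a := ⌊(1/z).re + 1/2⌋ with hadef
  set b := ⌊(1/z).im + 1/2⌋ with hbdef
  have ha1 : (a:ℝ) ≤ r / n + 1/2 := by rw [hadef, ← hre]; exact Int.floor_le _
  have ha2 : r / n + 1/2 < a + 1 := by rw [hadef, ← hre]; exact Int.lt_floor_add_one _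
  have hb1 : (b:ℝ) ≤ -s / n + 1/2 := by rw [hbdef, ← him]; exact Int.floor_le _
  have hb2 : -s / n + 1/2 < b + 1 := by rw [hbdef, ← him]; exact Int.lt_floor_add_one _
  -- clear denominators
  have hA1 : ((a:ℝ) - 1/2) * n ≤ r := (le_div_iff₀ hn).mp (by linarith)
  have hA2 : r < ((a:ℝ) + 1/2) * n := (div_lt_iff₀ hn).mp (by linarith)
  have hB1 : ((b:ℝ) - 1/2) * n ≤ -s := (le_div_iff₀ hn).mp (by linarith)
  have hB2 : -s < ((b:ℝ) + 1/2) * n := (div_lt_iff₀ hn).mp (by linarith)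
  have heq : nearestGaussianInt (1/z) = (a : ℂ) + (b : ℂ) * Complex.I := rfl
  refine ⟨⟨a, b, heq⟩, ?_⟩
  intro hmem
  simp only [Set.mem_insert_iff, Set.mem_singleton_iff, heq] at hmem
  have hI : Complex.I = (0:ℂ) + (1:ℂ) * Complex.I := by ring
  have hone : (1:ℂ) = (1:ℂ) + (0:ℂ) * Complex.I := by ring
  have hneg : (-1:ℂ) = (-1:ℂ) + (0:ℂ) * Complex.I := by ring
  have hzero : (0:ℂ) = (0:ℂ) + (0:ℂ) * Complex.I := by ring
  rcases hmem with h | h | h | h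
  · -- a = 0, b = 0
    rw [hzero] at h
    have ha : (a:ℝ) = 0 := by
      have := congrArg Complex.re h; simpa using this
    have hb : (b:ℝ) = 0 := by
      have := congrArg Complex.im h; simpa using this
    rw [ha] at hA1 hA2; rw [hb] at hB1 hB2
    nlinarith [sq_nonneg r, sq_nonneg s, sq_nonneg n, hn, mul_pos hn hn]
  · -- a = 1, b = 0
    rw [hone] at h
    have ha : (a:ℝ) = 1 := by
      have := congrArg Complex.re h; simpa using this
    have hb : (b:ℝ) = 0 := by
      have := congrArg Complex.im h; simpa using this
    rw [ha] at hA1 hA2; rw [hb] at hB1 hB2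
    nlinarith [sq_nonneg (r - n), sq_nonneg s, mul_pos hn hn, hn,
      mul_nonneg (sub_nonneg.mpr hA1) (le_of_lt (sub_pos.mpr hA2)),
      mul_nonneg (sub_nonneg.mpr hB1) (le_of_lt (sub_pos.mpr hB2))]
  · -- a = 0, b = 1
    rw [hI] at h
    have ha : (a:ℝ) = 0 := by
      have := congrArg Complex.re h; simpa using this
    have hb : (b:ℝ) = 1 := by
      have := congrArg Complex.im h; simpa using this
    rw [ha] at hA1 hA2; rw [hb] at hB1 hB2
    nlinarith [sq_nonneg (s + n), sq_nonneg r, mul_pos hn hn, hn,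
      mul_nonneg (sub_nonneg.mpr hA1) (le_of_lt (sub_pos.mpr hA2)),
      mul_nonneg (sub_nonneg.mpr hB1) (le_of_lt (sub_pos.mpr hB2))]
  · -- a = -1, b = 0
    rw [hneg] at h
    have ha : (a:ℝ) = -1 := by
      have := congrArg Complex.re h; simpa using this
    have hb : (b:ℝ) = 0 := by
      have := congrArg Complex.im h; simpa using this
    rw [ha] at hA1 hA2; rw [hb] at hB1 hB2
    nlinarith [sq_nonneg (r + n), sq_nonneg s, mul_pos hn hn, hn,
      mul_nonneg (sub_nonneg.mpr hA1) (le_of_lt (sub_pos.mpr hA2)),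
      mul_nonneg (sub_nonneg.mpr hB1) (le_of_lt (sub_pos.mpr hB2))]
end

section
/- Let ζ₄ := α - i/2 where α = (2-√3)/2. Then ζ₄ satisfies the algebraic relation arising from the periodic continued fraction: 1/ζ₄ - (1+2i) = ζ₂ and 1/ζ₂ - (-2+i) = ζ₄, where ζ₂ := -1/2 - iα. Equivalently, T(ζ₄) = ζ₂ and T(ζ₂) = ζ₄ where T(z) = 1/z - [1/z] with [1/ζ₄] = 1+2i and [1/ζ₂] = -2+i. -/
open Complex

/-- The complex Gauss map. -/
noncomputable def gaussMap (z : ℂ) : ℂ := 1 / z - nearestGaussianInt (1 / z)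

noncomputable def alphaHCF : ℝ := (2 - Real.sqrt 3) / 2

noncomputable def zeta2 : ℂ := -(1/2) - (alphaHCF : ℝ) * Complex.I

noncomputable def zeta4 : ℂ := (alphaHCF : ℝ) - Complex.I / 2

lemma sq3 : Real.sqrt 3 * Real.sqrt 3 = 3 :=
  Real.mul_self_sqrt (by norm_num)

lemma s_lb : (1.7 : ℝ) < Real.sqrt 3 := by
  have := Real.sqrt_lt_sqrt (by norm_num : (0:ℝ) ≤ 2.89) (by norm_num : (2.89:ℝ) < 3)
  have h : Real.sqrt 2.89 = 1.7 := by
    rw [show (2.89:ℝ) = 1.7^2 by norm_num, Real.sqrt_sq (by norm_num)]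
  linarith [this, h.symm ▸ this]

lemma s_ub : Real.sqrt 3 < 1.8 := by
  have h : Real.sqrt 3 < Real.sqrt 3.24 :=
    Real.sqrt_lt_sqrt (by norm_num) (by norm_num)
  have h2 : Real.sqrt 3.24 = 1.8 := by
    rw [show (3.24:ℝ) = 1.8^2 by norm_num, Real.sqrt_sq (by norm_num)]
  linarith

lemma inv_zeta4 : 1 / zeta4 = ((1/2 : ℝ) : ℂ) + (((2 + Real.sqrt 3)/2 : ℝ) : ℂ) * Complex.I := by
  have hs := sq3
  have h1 := s_lb
  have h2 := s_ub
  have hne : zeta4 ≠ 0 := by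
    intro h
    have := congrArg Complex.im h
    simp [zeta4, alphaHCF] at this
  rw [div_eq_iff hne]
  simp only [zeta4, alphaHCF]
  apply Complex.ext <;> simp [Complex.ext_iff] <;> ring_nf <;> nlinarith [hs]

lemma inv_zeta2 : 1 / zeta2 = ((-(2 + Real.sqrt 3)/2 : ℝ) : ℂ) + (((1:ℝ)/2 : ℝ) : ℂ) * Complex.I := by
  have hs := sq3
  have h1 := s_lb
  have h2 := s_ub
  have hne : zeta2 ≠ 0 := by
    intro h
    have := congrArg Complex.re h
    simp [zeta2, alphaHCF] at this
  rw [div_eq_iff hne]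
  simp only [zeta2, alphaHCF]
  apply Complex.ext <;> simp [Complex.ext_iff] <;> ring_nf <;> nlinarith [hs]

theorem stmt_7 :
    nearestGaussianInt (1 / zeta4) = 1 + 2 * Complex.I ∧
    nearestGaussianInt (1 / zeta2) = -2 + Complex.I ∧
    1 / zeta4 - (1 + 2 * Complex.I) = zeta2 ∧
    1 / zeta2 - (-2 + Complex.I) = zeta4 ∧
    gaussMap zeta4 = zeta2 ∧ gaussMap zeta2 = zeta4 := by
  have hs := sq3
  have h1 := s_lb
  have h2 := s_ub
  have n4 : nearestGaussianInt (1 / zeta4) = 1 + 2 * Complex.I := by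
    rw [inv_zeta4, nearestGaussianInt]
    have e1 : ⌊((1:ℝ)/2 + 1/2)⌋ = 1 := by norm_num
    have e2 : ⌊((2 + Real.sqrt 3)/2 + 1/2)⌋ = 2 := by
      apply Int.floor_eq_iff.mpr <;> constructor <;> push_cast <;> linarith
    simp only [Complex.add_re, Complex.add_im, Complex.ofReal_re, Complex.ofReal_im,
      Complex.mul_re, Complex.mul_im, Complex.I_re, Complex.I_im]
    norm_num [e1, e2]
  have n2 : nearestGaussianInt (1 / zeta2) = -2 + Complex.I := by
    rw [inv_zeta2, nearestGaussianInt]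
    have e1 : ⌊((-Real.sqrt 3 + -2)/2 + 1/2)⌋ = -2 := by
      apply Int.floor_eq_iff.mpr <;> constructor <;> push_cast <;> linarith
    have e2 : ⌊((1:ℝ)/2 + 1/2)⌋ = 1 := by norm_num
    simp only [Complex.add_re, Complex.add_im, Complex.ofReal_re, Complex.ofReal_im,
      Complex.mul_re, Complex.mul_im, Complex.I_re, Complex.I_im]
    norm_num [e1, e2]
  have d4 : 1 / zeta4 - (1 + 2 * Complex.I) = zeta2 := by
    rw [inv_zeta4]
    simp only [zeta2, alphaHCF]
    apply Complex.ext <;> simp <;> ring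
  have d2 : 1 / zeta2 - (-2 + Complex.I) = zeta4 := by
    rw [inv_zeta2]
    simp only [zeta4, alphaHCF]
    apply Complex.ext <;> simp <;> ring
  exact ⟨n4, n2, d4, d2, by rw [gaussMap, n4]; exact d4, by rw [gaussMap, n2]; exact d2⟩
end
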